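/- Define f : ℝ² × ℝ → ℝ² by f(x,t) = ((−6−t³)x₁ + sin x₁, 5x₁ + (−4−t³)x₂ + sin x₂) (i.e. the system of Example 1 with b = 5 and φ(t) = −6−t³). Let δ : ℝ → ℝ² be continuous with ‖δ(t)‖/t³ → 0 as t → ∞ (‖δ(t)‖ = o(t³)). Then every differentiable x : [0,∞) → ℝ² satisfying x'(t) = f(x(t),t) + δ(t) for all t ≥ 0 converges to (0,0) as t → ∞; in particular the system is globally incrementally stable and the origin of the nominal system remains attractive even under unbounded perturbations δ. -/

import Mathlib

/-!
`V = ‖x‖²` satisfies `V' = 2⟪x, f(x,t) + δ(t)⟫ ≤ -2αV + 2‖δ‖√V` with `α(t) = 1/2 + t³`.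
Once `‖δ‖ ≤ ηα`, Young's inequality `2η√V ≤ V + η²` gives `(V - η²)' ≤ -α (V - η²)`, so
`V - η²` is bounded by a multiple of `exp (-∫ α)`; as `∫ α → ∞`, `V` is eventually below `2η²`,
for every `η > 0`.
-/

open Filter Topology

/-- The vector field of Example 1 with `b = 5` and `φ(t) = -6 - t³`:
`f(x,t) = ((-6-t³)x₁ + sin x₁, 5x₁ + (-4-t³)x₂ + sin x₂)`. -/
noncomputable def fExample19 (x : EuclideanSpace ℝ (Fin 2)) (t : ℝ) :
    EuclideanSpace ℝ (Fin 2) :=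
  (WithLp.equiv 2 (Fin 2 → ℝ)).symm
    ![(-6 - t ^ 3) * x 0 + Real.sin (x 0),
      5 * x 0 + (-4 - t ^ 3) * x 1 + Real.sin (x 1)]

open Asymptotics Real

open scoped RealInnerProductSpace

theorem le_mul_exp_sub_of_hasDerivAt_le_neg_mul {W W' A α : ℝ → ℝ} {T : ℝ}
    (hW : ∀ t ≥ T, HasDerivAt W (W' t) t) (hA : ∀ t ≥ T, HasDerivAt A (α t) t)
    (hle : ∀ t ≥ T, W' t ≤ -(α t * W t)) {t : ℝ} (ht : T ≤ t) :
    W t ≤ W T * exp (A T - A t) := by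
  have hderiv : ∀ s ≥ T, HasDerivAt (fun s => W s * exp (A s))
      (W' s * exp (A s) + W s * (exp (A s) * α s)) s :=
    fun s hs => (hW s hs).mul (hA s hs).exp
  have hanti : AntitoneOn (fun s => W s * exp (A s)) (Set.Ici T) := by
    refine antitoneOn_of_hasDerivWithinAt_nonpos (convex_Ici T)
      (fun s hs => (hderiv s hs).continuousAt.continuousWithinAt)
      (fun s hs => (hderiv s (le_of_lt <| by simpa using hs)).hasDerivWithinAt) ?_
    intro s hs
    have hs : T ≤ s := le_of_lt <| by simpa using hs
    nlinarith [hle s hs, exp_pos (A s)]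
  have key : W t * exp (A t) ≤ W T * exp (A T) := hanti Set.self_mem_Ici ht ht
  rw [sub_eq_add_neg, exp_add, exp_neg, ← mul_assoc, ← div_eq_mul_inv,
    le_div_iff₀ (exp_pos _)]
  exact key

section InnerProductSpace

variable {E : Type*} [NormedAddCommGroup E] [InnerProductSpace ℝ E]

theorem norm_sq_sub_sq_le_mul_exp {x x' : ℝ → E} {A α : ℝ → ℝ} {T η : ℝ}
    (hx : ∀ t ≥ T, HasDerivAt x (x' t) t) (hA : ∀ t ≥ T, HasDerivAt A (α t) t)
    (hα : ∀ t ≥ T, 0 ≤ α t)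
    (hinner : ∀ t ≥ T, ⟪x t, x' t⟫ ≤ α t * (η * ‖x t‖ - ‖x t‖ ^ 2)) {t : ℝ} (ht : T ≤ t) :
    ‖x t‖ ^ 2 - η ^ 2 ≤ (‖x T‖ ^ 2 - η ^ 2) * exp (A T - A t) := by
  refine le_mul_exp_sub_of_hasDerivAt_le_neg_mul (fun s hs => ((hx s hs).norm_sq).sub_const _)
    hA (fun s hs => ?_) ht
  have young : 2 * η * ‖x s‖ ≤ ‖x s‖ ^ 2 + η ^ 2 := by nlinarith [sq_nonneg (‖x s‖ - η)]
  nlinarith [hinner s hs, mul_le_mul_of_nonneg_left young (hα s hs)]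

theorem tendsto_nhds_zero_of_inner_le_neg_mul_norm_sq_add {x x' : ℝ → E} {A α β : ℝ → ℝ}
    (hx : ∀ᶠ t in atTop, HasDerivAt x (x' t) t) (hA : ∀ᶠ t in atTop, HasDerivAt A (α t) t)
    (hAtop : Tendsto A atTop atTop) (hα : ∀ᶠ t in atTop, 0 ≤ α t)
    (hinner : ∀ᶠ t in atTop, ⟪x t, x' t⟫ ≤ -(α t * ‖x t‖ ^ 2) + β t * ‖x t‖)
    (hβ : β =o[atTop] α) :
    Tendsto x atTop (𝓝 0) := by
  have hsmall (η : ℝ) (hη : 0 < η) : ∀ᶠ t in atTop, ‖x t‖ ^ 2 < 2 * η ^ 2 := by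
    obtain ⟨T, hT⟩ := eventually_atTop.1
      (hx.and <| hA.and <| hα.and <| hinner.and <| hβ.bound hη)
    have hbound (t : ℝ) (ht : T ≤ t) :
        ‖x t‖ ^ 2 - η ^ 2 ≤ (‖x T‖ ^ 2 - η ^ 2) * exp (A T - A t) := by
      refine norm_sq_sub_sq_le_mul_exp (fun s hs => (hT s hs).1) (fun s hs => (hT s hs).2.1)
        (fun s hs => (hT s hs).2.2.1) (fun s hs => ?_) ht
      obtain ⟨-, -, hαs, hinner_s, hβs⟩ := hT s hs
      rw [norm_of_nonneg hαs] at hβs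
      have := mul_le_mul_of_nonneg_right ((Real.le_norm_self _).trans hβs) (norm_nonneg (x s))
      linarith
    have hdecay : Tendsto (fun t => (‖x T‖ ^ 2 - η ^ 2) * exp (A T - A t)) atTop (𝓝 0) := by
      have hexp : Tendsto (fun t => exp (A T - A t)) atTop (𝓝 0) :=
        tendsto_exp_atBot.comp <| by
          simpa [sub_eq_add_neg] using
            tendsto_atBot_add_const_left _ (A T) (tendsto_neg_atTop_atBot.comp hAtop)
      simpa using hexp.const_mul (‖x T‖ ^ 2 - η ^ 2)
    filter_upwards [hdecay.eventually (gt_mem_nhds (pow_pos hη 2)), eventually_ge_atTop T]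
      with t hlt ht
    linarith [hbound t ht]
  refine NormedAddGroup.tendsto_nhds_zero.2 fun ε hε => ?_
  filter_upwards [hsmall (ε / 2) (half_pos hε)] with t ht
  exact lt_of_pow_lt_pow_left₀ 2 hε.le (by nlinarith)

end InnerProductSpace

theorem mul_sin_le_sq (a : ℝ) : a * sin a ≤ a ^ 2 :=
  calc a * sin a ≤ |a| * |sin a| := by rw [← abs_mul]; exact le_abs_self _
    _ ≤ |a| * |a| := mul_le_mul_of_nonneg_left abs_sin_le_abs (abs_nonneg a)
    _ = a ^ 2 := by rw [← sq, sq_abs]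

/-- The paper's bound `μ[Dₓf(x,t)] ≤ -(1/2 + t³)` on the logarithmic norm, in the integrated
form in which it is used. -/
theorem inner_fExample19_le (v : EuclideanSpace ℝ (Fin 2)) (t : ℝ) :
    ⟪v, fExample19 v t⟫ ≤ -((1 / 2 + t ^ 3) * ‖v‖ ^ 2) := by
  have hnorm : ‖v‖ ^ 2 = v 0 ^ 2 + v 1 ^ 2 := by
    simp [EuclideanSpace.norm_sq_eq, Fin.sum_univ_two]
  have hinner : ⟪v, fExample19 v t⟫ =
      v 0 * ((-6 - t ^ 3) * v 0 + sin (v 0)) +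
        v 1 * (5 * v 0 + (-4 - t ^ 3) * v 1 + sin (v 1)) := by
    simp [fExample19, PiLp.inner_apply, Fin.sum_univ_two]
    ring
  rw [hinner, hnorm]
  nlinarith [mul_sin_le_sq (v 0), mul_sin_le_sq (v 1), sq_nonneg (v 0 - v 1)]

theorem example1_solutions_tendsto_zero_general (δ : ℝ → EuclideanSpace ℝ (Fin 2))
    (hδo : Tendsto (fun t => ‖δ t‖ / t ^ 3) atTop (𝓝 0))
    (x : ℝ → EuclideanSpace ℝ (Fin 2))
    (hx : ∀ t : ℝ, 0 ≤ t → HasDerivAt x (fExample19 (x t) t + δ t) t) :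
    Tendsto x atTop (𝓝 0) := by
  have hA (t : ℝ) : HasDerivAt (fun t => t / 2 + t ^ 4 / 4) (1 / 2 + t ^ 3) t :=
    (((hasDerivAt_id' t).div_const 2).add ((hasDerivAt_pow 4 t).div_const 4)).congr_deriv
      (by norm_num)
  have hδ_cube : (fun t => ‖δ t‖) =o[atTop] fun t => t ^ 3 :=
    (isLittleO_iff_tendsto' <| (eventually_gt_atTop 0).mono fun t ht h =>
      absurd h (pow_pos ht 3).ne').2 hδo
  have hcube : (fun t : ℝ => t ^ 3) =O[atTop] fun t => 1 / 2 + t ^ 3 :=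
    IsBigO.of_bound' <| (eventually_ge_atTop 0).mono fun t ht => by
      rw [norm_of_nonneg (by positivity), norm_of_nonneg (by positivity)]
      linarith
  refine tendsto_nhds_zero_of_inner_le_neg_mul_norm_sq_add
    ((eventually_ge_atTop 0).mono hx) (Eventually.of_forall hA) ?_
    ((eventually_ge_atTop 0).mono fun t ht => by positivity) ?_ (hδ_cube.trans_isBigO hcube)
  · exact (tendsto_id.atTop_div_const two_pos).atTop_add_atTop
      ((tendsto_pow_atTop four_ne_zero).atTop_div_const four_pos)
  · refine Eventually.of_forall fun t => ?_
    rw [inner_add_right]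
    linarith [inner_fExample19_le (x t) t, real_inner_le_norm (x t) (δ t),
      mul_comm ‖x t‖ ‖δ t‖]

/-- Example 1. For the perturbed system `ẋ = f(x,t) + δ(t)`
of Example 1 (with `b = 5`, `φ(t) = -6 - t³`) and any continuous perturbation
with `‖δ(t)‖ = o(t³)`, every solution converges to the origin as `t → ∞`. -/
theorem example1_solutions_tendsto_zero (δ : ℝ → EuclideanSpace ℝ (Fin 2))
    (hδ : Continuous δ)
    (hδo : Tendsto (fun t => ‖δ t‖ / t ^ 3) atTop (𝓝 0))
    (x : ℝ → EuclideanSpace ℝ (Fin 2))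
    (hx : ∀ t : ℝ, 0 ≤ t → HasDerivAt x (fExample19 (x t) t + δ t) t) :
    Tendsto x atTop (𝓝 0) :=
  example1_solutions_tendsto_zero_general δ hδo x hx
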